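/- For every real q with 0 ≤ q ≤ 1 − 1/b (where b > 1) and every complex z with |z| > 1, the infinite product ∏_{m=1}^∞ |1 + q^{m-1}/z| is at least (1 − 1/|z|) · e^{(π²/6)(1−b)}. -/

import Mathlib

/-!
Write `r = ‖z‖`. The factor `m = 0` is at least `1 - 1/r`, and every other factor is at least
`1 - q^m`, so after taking logarithms it suffices to bound `∑_{m ≥ 1} -log (1 - q^m)`.
Expanding the logarithm and summing the geometric series in `m` first turns this sum into
`∑_{k ≥ 1} q^k / (k (1 - q^k))`, and `1 - q^k ≥ k q^(k-1) (1 - q)` bounds it by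
`ζ(2) · q / (1 - q) = (π²/6) · q / (1 - q) ≤ (π²/6) (b - 1)`.
-/

open Real Complex

lemma succ_mul_pow_mul_one_sub_le {q : ℝ} (hq0 : 0 ≤ q) (hq1 : q ≤ 1) (n : ℕ) :
    (n + 1) * q ^ n * (1 - q) ≤ 1 - q ^ (n + 1) := by
  have hsum : (n + 1) * q ^ n ≤ ∑ i ∈ Finset.range (n + 1), q ^ i := by
    simpa using Finset.card_nsmul_le_sum (Finset.range (n + 1)) (q ^ ·) (q ^ n)
      fun i hi => pow_le_pow_of_le_one hq0 hq1 (Finset.mem_range_succ_iff.1 hi)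
  rw [← mul_neg_geom_sum, mul_comm (1 - q)]
  exact mul_le_mul_of_nonneg_right hsum (by linarith)

lemma pow_succ_div_one_sub_pow_succ_le {q : ℝ} (hq0 : 0 ≤ q) (hq1 : q < 1) (n : ℕ) :
    q ^ (n + 1) / (1 - q ^ (n + 1)) ≤ q / (1 - q) / (n + 1) := by
  have hqn : q ^ (n + 1) < 1 := pow_lt_one₀ hq0 hq1 n.succ_ne_zero
  rw [div_div, div_le_div_iff₀ (by linarith) (by positivity)]
  have := mul_le_mul_of_nonneg_left (succ_mul_pow_mul_one_sub_le hq0 hq1.le n) hq0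
  have hexpand : q ^ (n + 1) * ((1 - q) * (n + 1)) = q * ((n + 1) * q ^ n * (1 - q)) := by ring
  linarith

lemma tsum_neg_log_one_sub_pow_succ_le {q : ℝ} (hq0 : 0 ≤ q) (hq1 : q < 1) :
    ∑' m : ℕ, -Real.log (1 - q ^ (m + 1)) ≤ π ^ 2 / 6 * (q / (1 - q)) := by
  set F : ℕ → ℕ → ℝ := fun m k => (q ^ (m + 1)) ^ (k + 1) / (k + 1)
  set S : ℕ → ℝ := fun k => q ^ (k + 1) / (1 - q ^ (k + 1)) / (k + 1)
  have hpow (n : ℕ) : q ^ (n + 1) < 1 := pow_lt_one₀ hq0 hq1 n.succ_ne_zero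
  have hrow (m : ℕ) : HasSum (F m) (-Real.log (1 - q ^ (m + 1))) :=
    hasSum_pow_div_log_of_abs_lt_one ((abs_of_nonneg (by positivity)).trans_lt (hpow m))
  have hcol (k : ℕ) : HasSum (fun m => F m k) (S k) := by
    have := ((hasSum_geometric_of_lt_one (by positivity) (hpow k)).mul_left
      (q ^ (k + 1))).div_const ((k : ℝ) + 1)
    have hswap : (fun m => F m k) = fun m => q ^ (k + 1) * (q ^ (k + 1)) ^ m / (k + 1) := by
      funext m; simp only [F]; ring
    rw [hswap]; simpa only [S, div_eq_mul_inv] using this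
  have hzeta : HasSum (fun k : ℕ => q / (1 - q) * (1 / ((k : ℝ) + 1) ^ 2))
      (q / (1 - q) * (π ^ 2 / 6)) := by
    refine HasSum.mul_left _ ?_
    have := (hasSum_nat_add_iff (f := fun n : ℕ => 1 / (n : ℝ) ^ 2) 1).2
      (by simpa using hasSum_zeta_two)
    simpa only [Nat.cast_add, Nat.cast_one] using this
  have hS_le (k : ℕ) : S k ≤ q / (1 - q) * (1 / ((k : ℝ) + 1) ^ 2) := by
    calc S k ≤ q / (1 - q) / (k + 1) / (k + 1) :=
          div_le_div_of_nonneg_right (pow_succ_div_one_sub_pow_succ_le hq0 hq1 k) (by positivity)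
      _ = _ := by rw [div_div, ← sq, mul_one_div]
  have hS : Summable S :=
    hzeta.summable.of_nonneg_of_le (fun k => (hcol k).nonneg fun m => by positivity) hS_le
  have hF : Summable (Function.uncurry fun k m => F m k) :=
    (summable_prod_of_nonneg fun _ => div_nonneg (by positivity) (by positivity)).2
      ⟨fun k => (hcol k).summable, hS.congr fun k => (hcol k).tsum_eq.symm⟩
  calc ∑' m : ℕ, -Real.log (1 - q ^ (m + 1)) = ∑' (m) (k), F m k :=
        tsum_congr fun m => (hrow m).tsum_eq.symm
    _ = ∑' k, S k := hF.tsum_comm.trans (tsum_congr fun k => (hcol k).tsum_eq)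
    _ ≤ q / (1 - q) * (π ^ 2 / 6) := hzeta.tsum_eq ▸ hS.tsum_le_tsum hS_le hzeta.summable
    _ = π ^ 2 / 6 * (q / (1 - q)) := mul_comm _ _

lemma pi_sq_div_six_mul_one_sub_le_tsum_log_one_sub_pow_succ {b q : ℝ} (hb : 1 < b)
    (hq0 : 0 ≤ q) (hq : q ≤ 1 - 1 / b) :
    π ^ 2 / 6 * (1 - b) ≤ ∑' m : ℕ, Real.log (1 - q ^ (m + 1)) := by
  have hb0 : 0 < b := by linarith
  have hq1 : q < 1 := hq.trans_lt (sub_lt_self 1 (one_div_pos.2 hb0))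
  have hbq : b * q ≤ b - 1 := by
    have := mul_le_mul_of_nonneg_left hq hb0.le
    rwa [mul_sub, mul_one, mul_one_div_cancel hb0.ne'] at this
  have hqb : q / (1 - q) ≤ b - 1 := by
    rw [div_le_iff₀ (by linarith)]
    linarith
  have hkey := tsum_neg_log_one_sub_pow_succ_le hq0 hq1
  rw [tsum_neg] at hkey
  linarith [mul_le_mul_of_nonneg_left hqb (by positivity : (0 : ℝ) ≤ π ^ 2 / 6)]

lemma summable_log_one_sub_pow_succ {q : ℝ} (hq : |q| < 1) :
    Summable fun m : ℕ => Real.log (1 - q ^ (m + 1)) := by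
  simpa only [← sub_eq_add_neg, ← pow_succ'] using Real.summable_log_one_add_of_summable
    ((summable_geometric_of_abs_lt_one hq).mul_left q).neg

lemma one_sub_norm_le_norm_one_add {R : Type*} [SeminormedRing R] [NormOneClass R] (w : R) :
    1 - ‖w‖ ≤ ‖1 + w‖ := by
  simpa using norm_sub_norm_le (1 : R) (-w)

theorem stmt5 (b : ℝ) (hb : 1 < b) (q : ℝ) (hq0 : 0 ≤ q) (hq : q ≤ 1 - 1 / b)
    (z : ℂ) (hz : 1 < ‖z‖) :
    (1 - 1 / ‖z‖) * Real.exp ((π ^ 2 / 6) * (1 - b))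
      ≤ ∏' m : ℕ, ‖(1 + (q : ℂ) ^ m / z)‖ := by
  have hq1 : q < 1 := hq.trans_lt (sub_lt_self 1 (one_div_pos.2 (by linarith)))
  have hnorm (m : ℕ) : ‖(q : ℂ) ^ m / z‖ = q ^ m / ‖z‖ := by
    rw [norm_div, norm_pow, Complex.norm_real, Real.norm_of_nonneg hq0]
  have hpos (m : ℕ) : 0 < ‖1 + (q : ℂ) ^ m / z‖ := by
    refine lt_of_lt_of_le ?_ (one_sub_norm_le_norm_one_add _)
    rw [hnorm, sub_pos, div_lt_one (by linarith)]
    exact (pow_le_one₀ hq0 hq1.le).trans_lt hz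
  have hsum : Summable fun m : ℕ => Real.log ‖1 + (q : ℂ) ^ m / z‖ :=
    Summable.summable_log_norm_one_add
      (by simpa only [hnorm] using (summable_geometric_of_lt_one hq0 hq1).div_const ‖z‖)
  have hterm (m : ℕ) :
      Real.log (1 - q ^ (m + 1)) ≤ Real.log ‖1 + (q : ℂ) ^ (m + 1) / z‖ := by
    refine Real.log_le_log ?_ (le_trans ?_ (one_sub_norm_le_norm_one_add _))
    · exact sub_pos.2 (pow_lt_one₀ hq0 hq1 m.succ_ne_zero)
    · rw [hnorm]
      exact sub_le_sub_left (div_le_self (by positivity) (by linarith)) 1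
  have hhead : 1 - 1 / ‖z‖ ≤ ‖1 + (q : ℂ) ^ 0 / z‖ := by
    calc 1 - 1 / ‖z‖ = 1 - ‖(q : ℂ) ^ 0 / z‖ := by rw [hnorm, pow_zero]
      _ ≤ _ := one_sub_norm_le_norm_one_add _
  rw [← Real.rexp_tsum_eq_tprod hpos hsum, hsum.tsum_eq_zero_add, Real.exp_add,
    Real.exp_log (hpos 0)]
  refine mul_le_mul hhead (exp_le_exp.2 ?_) (exp_pos _).le (norm_nonneg _)
  exact (pi_sq_div_six_mul_one_sub_le_tsum_log_one_sub_pow_succ hb hq0 hq).trans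
    ((summable_log_one_sub_pow_succ (abs_lt.2 ⟨by linarith, hq1⟩)).tsum_le_tsum hterm
      ((summable_nat_add_iff 1).2 hsum))
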